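/- Let y = A s with s ≠ 0 and ‖e‖₂ = ε_y ‖y‖₂ for some ε_y ≥ 0. If A satisfies the RIP of order K, s_K is the best K-term approximation of s, r_K = ‖s−s_K‖₂/‖s‖₂ and s_K' = ‖s−s_K‖₁/(√K‖s‖₂), then ‖e‖₂ ≤ ε_y · ‖A‖₂^{(K)} · ‖s‖₂ · (1 + r_K + s_K'), where ‖A‖₂^{(K)} is the maximal spectral norm over K-column submatrices. -/

import Mathlib

/-!
Split `s = s_K + (s - s_K)`. A best `K`-term approximation agrees with `s` on its support, so
`‖A s_K‖₂ ≤ ‖A‖₂^{(K)} ‖s_K‖₂ ≤ ‖A‖₂^{(K)} ‖s‖₂`. For an arbitrary `h`, peel off a set `T` of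
its `K` largest entries: the head costs `‖A‖₂^{(K)} ‖h_T‖₂`, while every tail entry is at most
the smallest head entry `t`, and `√K t ≤ ‖h_T‖₁ / √K`. Repeating this on the tail (induction on
the support size, with a sup-norm bound carried along) gives
`‖A h‖₂ ≤ ‖A‖₂^{(K)} (‖h‖₂ + ‖h‖₁ / √K)`, which for `h = s - s_K` finishes the proof.
-/

open Matrix Finset

/-- The ℓ₂ norm of a finite real vector. -/
noncomputable def l2 {n : ℕ} (v : Fin n → ℝ) : ℝ := Real.sqrt (∑ i, (v i) ^ 2)

/-- The ℓ₁ norm of a finite real vector. -/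
noncomputable def l1 {n : ℕ} (v : Fin n → ℝ) : ℝ := ∑ i, |v i|

/-- A vector is `K`-sparse if it has at most `K` nonzero entries. -/
def IsSparse {n : ℕ} (K : ℕ) (v : Fin n → ℝ) : Prop :=
  ∃ S : Finset (Fin n), S.card ≤ K ∧ ∀ i ∉ S, v i = 0

/-- `A` satisfies the RIP of order `K` with constant `δ`. -/
def SatisfiesRIP {m n : ℕ} (A : Matrix (Fin m) (Fin n) ℝ) (K : ℕ) (δ : ℝ) : Prop :=
  ∀ v : Fin n → ℝ, IsSparse K v →
    (1 - δ) * (l2 v) ^ 2 ≤ (l2 (A.mulVec v)) ^ 2 ∧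
      (l2 (A.mulVec v)) ^ 2 ≤ (1 + δ) * (l2 v) ^ 2

/-- Spectral norm (ℓ₂ operator norm) of a matrix. -/
noncomputable def specNorm {m n : ℕ} (A : Matrix (Fin m) (Fin n) ℝ) : ℝ :=
  sSup {c | ∃ v : Fin n → ℝ, l2 v ≤ 1 ∧ c = l2 (A.mulVec v)}

/-- The matrix with the columns of `A` indexed by `S` kept and all other columns zeroed,
representing the column-submatrix `A_S`. -/
def colRestrict {m n : ℕ} (A : Matrix (Fin m) (Fin n) ℝ) (S : Finset (Fin n)) :
    Matrix (Fin m) (Fin n) ℝ := fun i j => if j ∈ S then A i j else 0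

/-- `‖A‖₂^{(K)}`: the largest spectral norm over all `K`-column submatrices of `A`. -/
noncomputable def subNorm {m n : ℕ} (A : Matrix (Fin m) (Fin n) ℝ) (K : ℕ) : ℝ :=
  sSup {c | ∃ S : Finset (Fin n), S.card = K ∧ c = specNorm (colRestrict A S)}

/-- The pseudo-inverse `(BᵀB)⁻¹Bᵀ` of a full-column-rank matrix `B`. -/
noncomputable def pinv {m k : ℕ} (B : Matrix (Fin m) (Fin k) ℝ) : Matrix (Fin k) (Fin m) ℝ :=
  (Bᵀ * B)⁻¹ * Bᵀ

/-- `sK` is a best `K`-term (ℓ₂) approximation of `s`. -/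
def IsBestApprox {n : ℕ} (K : ℕ) (s sK : Fin n → ℝ) : Prop :=
  IsSparse K sK ∧ ∀ t : Fin n → ℝ, IsSparse K t → l2 (s - sK) ≤ l2 (s - t)

/-- Embed a vector indexed by `Fin k` into `Fin n` along an injection `f` (zero elsewhere). -/
noncomputable def embedVec {k n : ℕ} (f : Fin k → Fin n) (w : Fin k → ℝ) : Fin n → ℝ :=
  fun j => ∑ i, if f i = j then w i else 0

section Norms

variable {n : ℕ}

lemma l2_eq_norm_toLp (v : Fin n → ℝ) : l2 v = ‖WithLp.toLp 2 v‖ := by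
  simp [l2, EuclideanSpace.norm_eq]

lemma l2_sq (v : Fin n → ℝ) : l2 v ^ 2 = ∑ i, v i ^ 2 :=
  Real.sq_sqrt (sum_nonneg fun _ _ => sq_nonneg _)

lemma l2_nonneg (v : Fin n → ℝ) : 0 ≤ l2 v := Real.sqrt_nonneg _

lemma l2_pos {v : Fin n → ℝ} (hv : v ≠ 0) : 0 < l2 v := by
  rw [l2_eq_norm_toLp, norm_pos_iff]
  exact fun h => hv (congrArg WithLp.ofLp h)

lemma l2_add_le (u v : Fin n → ℝ) : l2 (u + v) ≤ l2 u + l2 v := by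
  simpa only [l2_eq_norm_toLp, WithLp.toLp_add] using norm_add_le _ _

lemma l2_smul (c : ℝ) (v : Fin n → ℝ) : l2 (c • v) = |c| * l2 v := by
  rw [l2_eq_norm_toLp, l2_eq_norm_toLp, WithLp.toLp_smul, norm_smul, Real.norm_eq_abs]

lemma l2_le_l2_of_sq_le {u v : Fin n → ℝ} (h : ∀ i, u i ^ 2 ≤ v i ^ 2) : l2 u ≤ l2 v :=
  Real.sqrt_le_sqrt (sum_le_sum fun i _ => h i)

lemma l2_le_sqrt_card_mul {v : Fin n → ℝ} {T : Finset (Fin n)} {t : ℝ} (ht : 0 ≤ t)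
    (hvT : ∀ i ∉ T, v i = 0) (hvt : ∀ i, |v i| ≤ t) : l2 v ≤ √(#T) * t := by
  have hsum : ∑ i, v i ^ 2 ≤ #T * t ^ 2 := by
    rw [← sum_subset (subset_univ T) fun i _ hi => by simp [hvT i hi], ← nsmul_eq_mul,
      ← sum_const]
    exact sum_le_sum fun i _ => sq_le_sq' (abs_le.1 (hvt i)).1 (abs_le.1 (hvt i)).2
  calc l2 v ≤ √(#T * t ^ 2) := Real.sqrt_le_sqrt hsum
    _ = √(#T) * t := by rw [Real.sqrt_mul (Nat.cast_nonneg _), Real.sqrt_sq ht]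

end Norms

section SpecNorm

variable {m n : ℕ}

open scoped Matrix.Norms.L2Operator in
lemma bddAbove_specNorm_set (B : Matrix (Fin m) (Fin n) ℝ) :
    BddAbove {c | ∃ v : Fin n → ℝ, l2 v ≤ 1 ∧ c = l2 (B *ᵥ v)} := by
  refine ⟨‖B‖, ?_⟩
  rintro _ ⟨v, hv, rfl⟩
  calc l2 (B *ᵥ v) ≤ ‖B‖ * l2 v := by
        rw [l2_eq_norm_toLp, l2_eq_norm_toLp]
        exact B.l2_opNorm_mulVec (WithLp.toLp 2 v)
    _ ≤ ‖B‖ := mul_le_of_le_one_right (norm_nonneg B) hv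

lemma specNorm_nonneg (B : Matrix (Fin m) (Fin n) ℝ) : 0 ≤ specNorm B :=
  le_csSup (bddAbove_specNorm_set B) ⟨0, by simp [l2], by simp [l2]⟩

lemma l2_mulVec_le_specNorm_mul (B : Matrix (Fin m) (Fin n) ℝ) (v : Fin n → ℝ) :
    l2 (B *ᵥ v) ≤ specNorm B * l2 v := by
  rcases eq_or_ne v 0 with rfl | hv
  · simp [l2]
  have hpos := l2_pos hv
  have hunit : l2 ((l2 v)⁻¹ • v) = 1 := by
    rw [l2_smul, abs_of_pos (inv_pos.2 hpos), inv_mul_cancel₀ hpos.ne']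
  have hle : (l2 v)⁻¹ * l2 (B *ᵥ v) ≤ specNorm B := by
    refine le_csSup (bddAbove_specNorm_set B) ⟨_, hunit.le, ?_⟩
    rw [mulVec_smul, l2_smul, abs_of_pos (inv_pos.2 hpos)]
  rwa [inv_mul_le_iff₀ hpos, mul_comm] at hle

lemma specNorm_colRestrict_le_subNorm (A : Matrix (Fin m) (Fin n) ℝ) {K : ℕ}
    {S : Finset (Fin n)} (hS : #S = K) : specNorm (colRestrict A S) ≤ subNorm A K := by
  refine le_csSup ((Set.finite_range fun S => specNorm (colRestrict A S)).subset ?_).bddAbove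
    ⟨S, hS, rfl⟩
  rintro _ ⟨S, -, rfl⟩
  exact ⟨S, rfl⟩

lemma subNorm_nonneg (A : Matrix (Fin m) (Fin n) ℝ) {K : ℕ} (hKn : K ≤ n) :
    0 ≤ subNorm A K := by
  obtain ⟨S, -, hS⟩ := exists_subset_card_eq (s := (univ : Finset (Fin n))) (by simpa using hKn)
  exact (specNorm_nonneg _).trans (specNorm_colRestrict_le_subNorm A hS)

lemma l2_mulVec_le_subNorm_mul_of_isSparse (A : Matrix (Fin m) (Fin n) ℝ) {K : ℕ}
    (hKn : K ≤ n) {v : Fin n → ℝ} (hv : IsSparse K v) :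
    l2 (A *ᵥ v) ≤ subNorm A K * l2 v := by
  obtain ⟨S, hSK, hvS⟩ := hv
  obtain ⟨T, hST, -, hT⟩ := exists_subsuperset_card_eq (subset_univ S) hSK (by simpa using hKn)
  have hAv : A *ᵥ v = colRestrict A T *ᵥ v := by
    ext i
    simp only [mulVec, dotProduct]
    refine sum_congr rfl fun j _ => ?_
    by_cases hj : j ∈ T
    · simp [colRestrict, hj]
    · simp [colRestrict, hj, hvS j fun hjS => hj (hST hjS)]
  rw [hAv]
  exact (l2_mulVec_le_specNorm_mul _ v).trans
    (mul_le_mul_of_nonneg_right (specNorm_colRestrict_le_subNorm A hT) (l2_nonneg v))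

end SpecNorm

lemma exists_card_eq_forall_notMem_le {ι α : Type*} [Fintype ι] [DecidableEq ι] [LinearOrder α]
    (f : ι → α) {K : ℕ} (hK : K ≤ Fintype.card ι) :
    ∃ T : Finset ι, #T = K ∧ ∀ i ∈ T, ∀ j ∉ T, f j ≤ f i := by
  induction K with
  | zero => exact ⟨∅, rfl, by simp⟩
  | succ k ih =>
    obtain ⟨T, hTk, hTtop⟩ := ih (Nat.le_of_succ_le hK)
    have hne : Tᶜ.Nonempty := by
      rw [← card_pos, card_compl, hTk]
      omega
    obtain ⟨j₀, hj₀, hj₀max⟩ := exists_max_image Tᶜ f hne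
    rw [mem_compl] at hj₀
    refine ⟨insert j₀ T, by rw [card_insert_of_notMem hj₀, hTk], ?_⟩
    intro i hi j hj
    rw [mem_insert, not_or] at hj
    rcases mem_insert.1 hi with rfl | hiT
    · exact hj₀max j (mem_compl.2 hj.2)
    · exact hTtop i hiT j hj.2

section Indicator

variable {n : ℕ} (T : Finset (Fin n)) (v : Fin n → ℝ)

lemma isSparse_indicator : IsSparse (#T) ((T : Set (Fin n)).indicator v) :=
  ⟨T, le_rfl, fun _ hi => Set.indicator_of_notMem (by simpa using hi) v⟩

lemma l1_indicator : l1 ((T : Set (Fin n)).indicator v) = ∑ i ∈ T, |v i| := by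
  simp [l1, Set.indicator_apply, apply_ite abs, sum_ite_mem]

lemma l1_indicator_add_l1_indicator_compl :
    l1 ((T : Set (Fin n)).indicator v) + l1 ((T : Set (Fin n))ᶜ.indicator v) = l1 v := by
  simp only [l1, ← sum_add_distrib]
  refine sum_congr rfl fun j _ => ?_
  by_cases hj : j ∈ T <;> simp [hj]

lemma l2_indicator_le : l2 ((T : Set (Fin n)).indicator v) ≤ l2 v :=
  l2_le_l2_of_sq_le fun j => by by_cases hj : j ∈ T <;> simp [hj, sq_nonneg]

end Indicator

section GeneralSignals

variable {m n : ℕ} (A : Matrix (Fin m) (Fin n) ℝ) {K : ℕ}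

lemma l2_mulVec_le_of_tail_bound (hK : 0 < K) (hKn : K ≤ n) {h : Fin n → ℝ}
    {T : Finset (Fin n)} (hT : #T = K) (hTtop : ∀ i ∈ T, ∀ j ∉ T, |h j| ≤ |h i|)
    (htail : ∀ t, 0 ≤ t → (∀ j, |(T : Set (Fin n))ᶜ.indicator h j| ≤ t) →
      l2 (A *ᵥ (T : Set (Fin n))ᶜ.indicator h) ≤
        subNorm A K * (√K * t + l1 ((T : Set (Fin n))ᶜ.indicator h) / √K)) :
    l2 (A *ᵥ h) ≤ subNorm A K * (l2 ((T : Set (Fin n)).indicator h) + l1 h / √K) := by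
  set C := subNorm A K
  set hHead := (T : Set (Fin n)).indicator h
  set hTail := (T : Set (Fin n))ᶜ.indicator h
  have hC : 0 ≤ C := subNorm_nonneg A hKn
  have hsqrtK : 0 < √(K : ℝ) := Real.sqrt_pos.2 (Nat.cast_pos.2 hK)
  obtain ⟨i₀, hi₀, hmin⟩ := exists_min_image T (fun i => |h i|) (card_pos.1 (hT ▸ hK))
  have hTail_le : ∀ j, |hTail j| ≤ |h i₀| := fun j => by
    by_cases hj : j ∈ T
    · simp [hTail, hj]
    · simpa [hTail, hj] using hTtop i₀ hi₀ j hj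
  -- each of the `K` head entries dominates the whole tail
  have hmin_le : √K * |h i₀| ≤ l1 hHead / √K := by
    rw [le_div_iff₀ hsqrtK, mul_right_comm, Real.mul_self_sqrt (Nat.cast_nonneg K), l1_indicator,
      ← hT, ← nsmul_eq_mul]
    exact card_nsmul_le_sum T _ _ hmin
  calc l2 (A *ᵥ h) = l2 (A *ᵥ hHead + A *ᵥ hTail) := by
        rw [← mulVec_add, Set.indicator_self_add_compl]
    _ ≤ l2 (A *ᵥ hHead) + l2 (A *ᵥ hTail) := l2_add_le _ _
    _ ≤ C * l2 hHead + C * (√K * |h i₀| + l1 hTail / √K) :=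
        add_le_add (l2_mulVec_le_subNorm_mul_of_isSparse A hKn (hT ▸ isSparse_indicator T h))
          (htail _ (abs_nonneg _) hTail_le)
    _ ≤ C * l2 hHead + C * (l1 hHead / √K + l1 hTail / √K) := by gcongr
    _ = C * (l2 hHead + l1 h / √K) := by
        rw [← l1_indicator_add_l1_indicator_compl T h]
        ring

lemma l2_mulVec_le_of_abs_le (hK : 0 < K) (hKn : K ≤ n) {N : ℕ} {h : Fin n → ℝ}
    (hN : IsSparse N h) {t : ℝ} (ht : 0 ≤ t) (hht : ∀ j, |h j| ≤ t) :
    l2 (A *ᵥ h) ≤ subNorm A K * (√K * t + l1 h / √K) := by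
  induction N using Nat.strong_induction_on generalizing h t with
  | _ N ih =>
  obtain ⟨T, hT, hTtop⟩ := exists_card_eq_forall_notMem_le (fun j => |h j|) (by simpa using hKn)
  refine (l2_mulVec_le_of_tail_bound A hK hKn hT hTtop ?_).trans ?_
  · intro t' ht' htail
    by_cases hzero : (T : Set (Fin n))ᶜ.indicator h = 0
    · rw [hzero]
      simpa [l2, l1] using mul_nonneg (subNorm_nonneg A hKn) (mul_nonneg (Real.sqrt_nonneg _) ht')
    obtain ⟨S, hSN, hS⟩ := hN
    obtain ⟨j, hj⟩ := Function.ne_iff.1 hzero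
    have hjT : j ∉ T := fun hjT => hj (by simp [hjT])
    have hhj : h j ≠ 0 := fun hhj => hj (by simp [hhj])
    -- the tail is nonzero, so every head entry is nonzero and the head lies in the support
    have hTS : T ⊆ S := fun i hi => by
      by_contra hiS
      have := hTtop i hi j hjT
      simp only [hS i hiS, abs_zero, abs_nonpos_iff] at this
      exact hhj this
    refine ih #(S \ T) ?_ ⟨S \ T, le_rfl, fun i hi => ?_⟩ ht' htail
    · have := card_le_card hTS
      rw [card_sdiff_of_subset hTS]
      omega
    · by_cases hiT : i ∈ T
      · simp [hiT]
      · simp [hiT, hS i fun hiS => hi (mem_sdiff.2 ⟨hiS, hiT⟩)]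
  · have hHead : l2 ((T : Set (Fin n)).indicator h) ≤ √K * t := by
      rw [← hT]
      refine l2_le_sqrt_card_mul ht (fun i hi => by simp [hi]) fun i => ?_
      by_cases hi : i ∈ T <;> simp [hi, ht, hht i]
    gcongr
    exact subNorm_nonneg A hKn

lemma l2_mulVec_le_subNorm_mul (hK : 0 < K) (hKn : K ≤ n) (h : Fin n → ℝ) :
    l2 (A *ᵥ h) ≤ subNorm A K * (l2 h + l1 h / √K) := by
  obtain ⟨T, hT, hTtop⟩ := exists_card_eq_forall_notMem_le (fun j => |h j|) (by simpa using hKn)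
  have hsparse : IsSparse n ((T : Set (Fin n))ᶜ.indicator h) := ⟨univ, by simp, by simp⟩
  refine (l2_mulVec_le_of_tail_bound A hK hKn hT hTtop fun t ht htail =>
    l2_mulVec_le_of_abs_le A hK hKn hsparse ht htail).trans ?_
  gcongr
  · exact subNorm_nonneg A hKn
  · exact l2_indicator_le T h

end GeneralSignals

lemma IsBestApprox.l2_le {n K : ℕ} {s sK : Fin n → ℝ} (hbest : IsBestApprox K s sK) :
    l2 sK ≤ l2 s := by
  obtain ⟨⟨S, hSK, hS⟩, hopt⟩ := hbest
  set sS := (S : Set (Fin n)).indicator s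
  have hle : ∀ j, (s j - sS j) ^ 2 ≤ (s j - sK j) ^ 2 := fun j => by
    by_cases hj : j ∈ S
    · simp [sS, hj, sq_nonneg]
    · simp [sS, hj, hS j hj]
  -- optimality of `sK` against the competitor `sS` forces equality in every term
  have hsum : ∑ j, (s j - sK j) ^ 2 ≤ ∑ j, (s j - sS j) ^ 2 := by
    have := pow_le_pow_left₀ (l2_nonneg _) (hopt sS ⟨S, hSK, fun i hi => by simp [sS, hi]⟩) 2
    simpa only [l2_sq, Pi.sub_apply] using this
  have heq := (sum_eq_sum_iff_of_le fun j (_ : j ∈ univ) => hle j).1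
    (le_antisymm (sum_le_sum fun j _ => hle j) hsum)
  refine l2_le_l2_of_sq_le fun j => ?_
  by_cases hj : j ∈ S
  · have hzero : (s j - sK j) ^ 2 = 0 := by simpa [sS, hj] using (heq j (mem_univ j)).symm
    rw [← sub_eq_zero.1 (pow_eq_zero_iff two_ne_zero |>.1 hzero)]
  · simp [hS j hj, sq_nonneg]

theorem stmt12_general {m n : ℕ} (A : Matrix (Fin m) (Fin n) ℝ) (K : ℕ) (hK : 0 < K) (hKn : K ≤ n)
    (s : Fin n → ℝ) (hs : s ≠ 0) (sK : Fin n → ℝ)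
    (hbest : IsBestApprox K s sK) (e : Fin m → ℝ) (εy : ℝ) (hεy : 0 ≤ εy)
    (he : l2 e = εy * l2 (A.mulVec s)) :
    l2 e ≤ εy * subNorm A K * l2 s *
      (1 + l2 (s - sK) / l2 s + l1 (s - sK) / (Real.sqrt K * l2 s)) := by
  have hC : 0 ≤ subNorm A K := subNorm_nonneg A hKn
  have hAs : l2 (A *ᵥ s) ≤ subNorm A K * (l2 s + l2 (s - sK) + l1 (s - sK) / √K) :=
    calc l2 (A *ᵥ s) = l2 (A *ᵥ sK + A *ᵥ (s - sK)) := by rw [← mulVec_add, add_sub_cancel]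
      _ ≤ l2 (A *ᵥ sK) + l2 (A *ᵥ (s - sK)) := l2_add_le _ _
      _ ≤ subNorm A K * l2 s + subNorm A K * (l2 (s - sK) + l1 (s - sK) / √K) :=
          add_le_add ((l2_mulVec_le_subNorm_mul_of_isSparse A hKn hbest.1).trans
              (mul_le_mul_of_nonneg_left hbest.l2_le hC))
            (l2_mulVec_le_subNorm_mul A hK hKn (s - sK))
      _ = subNorm A K * (l2 s + l2 (s - sK) + l1 (s - sK) / √K) := by ring
  have hls := (l2_pos hs).ne'
  calc l2 e ≤ εy * (subNorm A K * (l2 s + l2 (s - sK) + l1 (s - sK) / √K)) :=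
        he ▸ mul_le_mul_of_nonneg_left hAs hεy
    _ = _ := by field_simp

/-- Bound on the measurement noise:
`‖e‖₂ ≤ ε_y·‖A‖₂^{(K)}·‖s‖₂·(1 + r_K + s_K')`. -/
theorem stmt12 {m n : ℕ} (A : Matrix (Fin m) (Fin n) ℝ) (K : ℕ) (hK : 0 < K) (hKn : K ≤ n)
    (δ : ℝ) (h : SatisfiesRIP A K δ) (s : Fin n → ℝ) (hs : s ≠ 0) (sK : Fin n → ℝ)
    (hbest : IsBestApprox K s sK) (e : Fin m → ℝ) (εy : ℝ) (hεy : 0 ≤ εy)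
    (he : l2 e = εy * l2 (A.mulVec s)) :
    l2 e ≤ εy * subNorm A K * l2 s *
      (1 + l2 (s - sK) / l2 s + l1 (s - sK) / (Real.sqrt K * l2 s)) :=
  stmt12_general A K hK hKn s hs sK hbest e εy hεy he
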